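/- For any (u, v) ∈ ℚ² with (u, v) ≠ (0, 0), the family (K_{u,v}(w)), indexed by all nonempty words w over the alphabet {2,3}, is linearly independent over ℚ in A. Equivalently, the zinbiel subalgebra C_{u,v} of A generated by z_2 and z_3 under the half-shuffle product is a free zinbiel algebra on these two generators. -/

import Mathlib

/-- Words over the alphabet `{0,1}`, encoded with `false` = `0` and `true` = `1`. -/
abbrev Word : Type := List Bool

/-- The ℚ-vector space `A` of finitely supported functions on words over `{0,1}`. -/
abbrev A01 : Type := Word →₀ ℚ

/-- The basis element `δ_x` of `A` attached to a word `x`. -/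
noncomputable def δ (x : Word) : A01 := Finsupp.single x 1

/-- Prepend the letter `a` to every word of a formal sum. -/
noncomputable def prependLetter (a : Bool) (f : A01) : A01 :=
  Finsupp.mapDomain (List.cons a) f

/-- The shuffle product of two words, as an element of `A`. -/
noncomputable def shuffle : Word → Word → A01
  | [], y => δ y
  | a :: x, [] => δ (a :: x)
  | a :: x, b :: y =>
      prependLetter a (shuffle x (b :: y)) + prependLetter b (shuffle (a :: x) y)
  termination_by x y => x.length + y.length

/-- The half-shuffle product on basis words: `δ_{a::x} ≺ δ_y = a·(x ш y)`, `δ_[] ≺ δ_y = 0`. -/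
noncomputable def halfWord : Word → Word → A01
  | [], _ => 0
  | a :: x, y => prependLetter a (shuffle x y)

/-- The half-shuffle (zinbiel) product `≺` on `A`, extended bilinearly from basis words. -/
noncomputable def half (f g : A01) : A01 :=
  f.sum fun x c => g.sum fun y d => (c * d) • halfWord x y

/-- The right-parenthesized product `K(a_1, …, a_n) = a_1 ≺ (a_2 ≺ (⋯ ≺ a_n))`,
with `K(a_n) = a_n`, and `δ_[]` (the shuffle unit) for the empty list. -/
noncomputable def Klist : List A01 → A01
  | [] => δ []
  | [a] => a
  | a :: b :: l => half a (Klist (b :: l))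

/-- The generators `z_2 = δ_{(1,0)}` and `z_3 = u·δ_{(1,0,0)} + v·δ_{(1,1,0)}`;
letters of the alphabet `{2,3}` are encoded with `false` = `2` and `true` = `3`. -/
noncomputable def zgen (u v : ℚ) : Bool → A01
  | false => δ [true, false]
  | true => u • δ [true, false, false] + v • δ [true, true, false]

/-- `K_{u,v}(w)` for a word `w` over `{2,3}` (encoded with `false` = `2`, `true` = `3`). -/
noncomputable def Kuv (u v : ℚ) (w : List Bool) : A01 :=
  Klist (w.map (zgen u v))

/-- The block substitution `2 ↦ (1,0)`, `3 ↦ (1,0,0)`. -/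
def blocks0 (c : Bool) : Word := if c then [true, false, false] else [true, false]

/-- The block substitution `2 ↦ (1,0)`, `3 ↦ (1,1,0)`. -/
def blocks1 (c : Bool) : Word := if c then [true, true, false] else [true, false]

/-- `cat₀(w)`: substitute `2 ↦ (1,0)`, `3 ↦ (1,0,0)` and concatenate. -/
def cat0 (w : List Bool) : Word := (w.map blocks0).flatten

/-- `cat₁(w)`: substitute `2 ↦ (1,0)`, `3 ↦ (1,1,0)` and concatenate. -/
def cat1 (w : List Bool) : Word := (w.map blocks1).flatten

/-- A good-shuffle realizing the word `x` from the words `ws = (w^1, …, w^n)`: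
a partition `S` of the positions of `x`, reading `x` along `S j` gives `w^j`,
and the minima of the parts are in increasing order. -/
def GoodShuffle (ws : List Word) (x : Word)
    (S : Fin ws.length → Finset (Fin x.length)) : Prop :=
  (∀ p : Fin x.length, ∃! j, p ∈ S j) ∧
  (∀ j, ((S j).sort (· ≤ ·)).map x.get = ws.get j) ∧
  (∀ j k, j < k → (S j).min < (S k).min)

/-- The weight of a word over `{2,3}`: the sum of its letters. -/
def wt (w : List Bool) : ℕ := (w.map fun c => if c then 3 else 2).sum

/-!
Order words lexicographically with `0 < 1`. For `u ≠ 0`, every word in the support of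
`K_{u,v}(w)` is at least `cat₀(w)`, where the coefficient is `u ^ #3(w)`; for `u = 0`,
every such word is at least `cat₁(w)`, and `K_{0,v}(w) = v ^ #3(w) • K_{0,1}(w)` where
`K_{0,1}(w)` has nonnegative coefficients and contains the concatenation `cat₁(w)`. Since
`cat₀` and `cat₁` are injective, the family is triangular, hence linearly independent.

The support bounds come from reading a shuffle letter by letter: the words in `δ_0 ш y`,
`δ_{00} ш y` and `δ_{10} ш y` are interleavings of `y` with pending blocks `0` and `10`.
-/

theorem linearIndependent_of_triangular {ι β R : Type*} [LinearOrder β] [Ring R]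
    [NoZeroDivisors R] (f : ι → β →₀ R) (lead : ι → β) (hlead : Function.Injective lead)
    (hsupp : ∀ i, ∀ x ∈ (f i).support, lead i ≤ x) (hdiag : ∀ i, f i (lead i) ≠ 0) :
    LinearIndependent R f := by
  classical
  rw [linearIndependent_iff']
  intro s g hsum i hi
  by_contra hgi
  obtain ⟨m, hm, hmin⟩ := (s.filter fun j => g j ≠ 0).exists_min_image lead
    ⟨i, Finset.mem_filter.mpr ⟨hi, hgi⟩⟩
  rw [Finset.mem_filter] at hm
  have hcoeff : (∑ j ∈ s, g j • f j) (lead m) = g m * f m (lead m) := by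
    rw [Finsupp.finsetSum_apply]
    refine (Finset.sum_eq_single m (fun j hj hjm => ?_) (fun h => absurd hm.1 h)).trans rfl
    by_cases hgj : g j = 0
    · simp [hgj]
    have hlt : lead m < lead j :=
      (hmin j (Finset.mem_filter.mpr ⟨hj, hgj⟩)).lt_of_ne (hlead.ne (Ne.symm hjm))
    have hfj : f j (lead m) = 0 := by
      by_contra hne
      exact hlt.not_ge (hsupp j _ (Finsupp.mem_support_iff.mpr hne))
    simp [hfj]
  rw [hsum, Finsupp.coe_zero, Pi.zero_apply] at hcoeff
  exact mul_ne_zero hm.2 (hdiag m) hcoeff.symm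

theorem mem_support_smul_add_smul {α R : Type*} [Semiring R] {a b : R} {f g : α →₀ R} {x : α}
    (hx : x ∈ (a • f + b • g).support) : a ≠ 0 ∧ x ∈ f.support ∨ x ∈ g.support := by
  simp only [Finsupp.mem_support_iff, Finsupp.add_apply, Finsupp.smul_apply, smul_eq_mul] at hx ⊢
  by_contra! h
  by_cases ha : a = 0
  · simp [ha, h.2] at hx
  · simp [h.1 ha, h.2] at hx

namespace List

theorem false_cons_lt_true_cons (l l' : List Bool) : false :: l < true :: l' :=
  Lex.rel (by decide)

theorem exists_eq_true_cons_of_le {l x : List Bool} (h : true :: l ≤ x) :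
    ∃ x', x = true :: x' := by
  match x with
  | [] => exact absurd h (not_le.mpr Lex.nil)
  | false :: x' => exact absurd h (not_le.mpr (false_cons_lt_true_cons _ _))
  | true :: x' => exact ⟨x', rfl⟩

theorem replicate_append_cons_self {α : Type*} (p : ℕ) (a : α) (l : List α) :
    replicate p a ++ a :: l = a :: (replicate p a ++ l) := by
  rw [← singleton_append, ← append_assoc, ← replicate_succ', replicate_succ, cons_append]

theorem replicate_false_append_cons_le {p : ℕ} {a : Bool} {y x : List Bool}
    (h : replicate p false ++ y ≤ x) : replicate p false ++ a :: y ≤ a :: x := by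
  cases p with
  | zero => exact cons_le_cons a h
  | succ p =>
    cases a with
    | false =>
      exact replicate_append_cons_self (p + 1) false y ▸ cons_le_cons false h
    | true => exact (false_cons_lt_true_cons _ _).le

end List

open List

theorem prependLetter_apply_cons_self (a : Bool) (f : A01) (x : Word) :
    prependLetter a f (a :: x) = f x :=
  Finsupp.mapDomain_apply List.cons_injective f x

theorem prependLetter_apply_cons_of_ne {a b : Bool} (h : a ≠ b) (f : A01) (x : Word) :
    prependLetter a f (b :: x) = 0 :=
  Finsupp.mapDomain_of_notMem_range _ _ (by rintro ⟨y, hy⟩; exact h (List.cons_eq_cons.mp hy).1)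

theorem exists_of_mem_support_prependLetter {a : Bool} {f : A01} {x : Word}
    (hx : x ∈ (prependLetter a f).support) : ∃ x', x = a :: x' ∧ x' ∈ f.support := by
  classical
  obtain ⟨x', hx', rfl⟩ := Finset.mem_image.mp (Finsupp.mapDomain_support hx)
  exact ⟨x', rfl, hx'⟩

theorem prependLetter_δ (a : Bool) (x : Word) : prependLetter a (δ x) = δ (a :: x) :=
  Finsupp.mapDomain_single

theorem prependLetter_nonneg (a : Bool) {f : A01} (hf : 0 ≤ f) : 0 ≤ prependLetter a f :=
  Finsupp.mapDomain_nonneg hf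

theorem δ_nonneg (x : Word) : 0 ≤ δ x :=
  Finsupp.single_nonneg.mpr zero_le_one

theorem eq_of_mem_support_δ {x y : Word} (hx : x ∈ (δ y).support) : x = y :=
  (Finsupp.mem_support_single _ _ _ |>.mp hx).1

theorem shuffle_nil_right (x : Word) : shuffle x [] = δ x := by
  cases x <;> rw [shuffle]

theorem shuffle_cons_cons (a : Bool) (x : Word) (b : Bool) (y : Word) :
    shuffle (a :: x) (b :: y) =
      prependLetter a (shuffle x (b :: y)) + prependLetter b (shuffle (a :: x) y) := by
  rw [shuffle]

theorem shuffle_nonneg (s y : Word) : 0 ≤ shuffle s y := by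
  fun_induction shuffle s y with
  | case1 y => exact δ_nonneg y
  | case2 a s => exact δ_nonneg _
  | case3 a s b y ih₁ ih₂ =>
    exact add_nonneg (prependLetter_nonneg a ih₁) (prependLetter_nonneg b ih₂)

theorem one_le_shuffle_apply_append (s y : Word) : 1 ≤ shuffle s y (s ++ y) := by
  fun_induction shuffle s y with
  | case1 y => simp [δ]
  | case2 a s => simp [δ]
  | case3 a s b y ih₁ _ =>
    rw [Finsupp.add_apply, List.cons_append, prependLetter_apply_cons_self]
    exact le_add_of_le_of_nonneg ih₁ (prependLetter_nonneg b (shuffle_nonneg _ _) _)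

theorem shuffle_replicate_apply_replicate_append (p : ℕ) {c : Word}
    (hc : ∀ c', c ≠ false :: c') :
    shuffle (replicate p false) c (replicate p false ++ c) = 1 := by
  induction p with
  | zero => simp [shuffle, δ]
  | succ p ih =>
    match c, hc with
    | [], _ => simp [shuffle_nil_right, δ]
    | false :: c', hc => exact absurd rfl (hc c')
    | true :: c', _ =>
      rw [replicate_succ, shuffle_cons_cons, Finsupp.add_apply, List.cons_append,
        prependLetter_apply_cons_self, prependLetter_apply_cons_of_ne (by decide), ih, add_zero]

/-- `shuffleWith t g` is `δ_t ш g`. -/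
noncomputable def shuffleWith (t : Word) : A01 →ₗ[ℚ] A01 :=
  Finsupp.linearCombination ℚ (shuffle t)

theorem shuffleWith_δ (t y : Word) : shuffleWith t (δ y) = shuffle t y := by
  rw [shuffleWith, δ, Finsupp.linearCombination_single, one_smul]

theorem shuffleWith_apply (t : Word) (g : A01) (x : Word) :
    shuffleWith t g x = ∑ y ∈ g.support, g y * shuffle t y x := by
  rw [shuffleWith, Finsupp.linearCombination_apply, Finsupp.sum, Finsupp.finsetSum_apply]
  rfl

theorem exists_of_mem_support_shuffleWith {t : Word} {g : A01} {x : Word}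
    (hx : x ∈ (shuffleWith t g).support) : ∃ y ∈ g.support, x ∈ (shuffle t y).support := by
  rw [Finsupp.mem_support_iff, shuffleWith_apply] at hx
  obtain ⟨y, hy, hne⟩ := Finset.exists_ne_zero_of_sum_ne_zero hx
  exact ⟨y, hy, Finsupp.mem_support_iff.mpr (right_ne_zero_of_mul hne)⟩

theorem shuffleWith_nonneg (t : Word) {g : A01} (hg : 0 ≤ g) : 0 ≤ shuffleWith t g := by
  intro x
  rw [shuffleWith_apply]
  exact Finset.sum_nonneg fun y _ => mul_nonneg (hg y) (shuffle_nonneg t y x)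

theorem le_shuffleWith_apply_append {g : A01} (hg : 0 ≤ g) (t c : Word) :
    g c ≤ shuffleWith t g (t ++ c) := by
  by_cases hc : c ∈ g.support
  · rw [shuffleWith_apply]
    refine le_trans ?_ (Finset.single_le_sum
      (fun y _ => mul_nonneg (hg y) (shuffle_nonneg t y _)) hc)
    exact le_mul_of_one_le_right (hg c) (one_le_shuffle_apply_append t c)
  · rw [Finsupp.notMem_support_iff.mp hc]
    exact shuffleWith_nonneg t hg _

theorem half_single_cons (a : Bool) (t : Word) (r : ℚ) (g : A01) :
    half (Finsupp.single (a :: t) r) g = r • prependLetter a (shuffleWith t g) := by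
  rw [half, Finsupp.sum_single_index (by simp), shuffleWith, Finsupp.linearCombination_apply,
    prependLetter, Finsupp.mapDomain_sum, Finsupp.smul_sum]
  refine Finsupp.sum_congr fun y _ => ?_
  rw [Finsupp.mapDomain_smul, smul_smul]
  rfl

theorem half_add_left (f₁ f₂ g : A01) : half (f₁ + f₂) g = half f₁ g + half f₂ g := by
  refine Finsupp.sum_add_index (fun _ _ => by simp) fun _ _ b₁ b₂ => ?_
  rw [← Finsupp.sum_add]
  exact Finsupp.sum_congr fun _ _ => by rw [add_mul, add_smul]

theorem half_smul_left (r : ℚ) (f g : A01) : half (r • f) g = r • half f g := by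
  rw [half, half, Finsupp.sum_smul_index (by simp), Finsupp.smul_sum]
  refine Finsupp.sum_congr fun _ _ => ?_
  rw [Finsupp.smul_sum]
  exact Finsupp.sum_congr fun _ _ => by rw [smul_smul, mul_assoc]

/-- `Interleaving p q y x`: the word `x` is an interleaving of `p` copies of `0`, `q` copies of
`10` and the word `y`. Reading the `1` of a pending `10` (constructor `ten`) leaves a pending
`0`. -/
inductive Interleaving : ℕ → ℕ → Word → Word → Prop
  | nil : Interleaving 0 0 [] []
  | zero {p q : ℕ} {y x : Word} : Interleaving p q y x → Interleaving (p + 1) q y (false :: x)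
  | ten {p q : ℕ} {y x : Word} :
      Interleaving (p + 1) q y x → Interleaving p (q + 1) y (true :: x)
  | letter {p q : ℕ} {y x : Word} (a : Bool) :
      Interleaving p q y x → Interleaving p q (a :: y) (a :: x)

namespace Interleaving

theorem refl : ∀ y : Word, Interleaving 0 0 y y
  | [] => nil
  | a :: y => (refl y).letter a

theorem zeros : ∀ p : ℕ, Interleaving p 0 [] (replicate p false)
  | 0 => nil
  | p + 1 => (zeros p).zero

theorem trans {p q p' q' : ℕ} {y₀ y x : Word} (h : Interleaving p q y x)
    (h' : Interleaving p' q' y₀ y) : Interleaving (p' + p) (q' + q) y₀ x := by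
  induction h generalizing y₀ p' q' with
  | nil => exact h'
  | zero _ ih => exact (ih h').zero
  | ten _ ih => exact (ih h').ten
  | letter a _ ih =>
    cases h' with
    | zero h' => exact Nat.add_right_comm _ 1 _ ▸ (ih h').zero
    | ten h' => exact Nat.add_right_comm _ 1 _ ▸ (Nat.add_right_comm _ 1 _ ▸ ih h').ten
    | letter _ h' => exact (ih h').letter a

theorem of_mem_support_shuffle {p q : ℕ} {s y x : Word} (hs : Interleaving p q [] s)
    (hx : x ∈ (shuffle s y).support) : Interleaving p q y x := by
  fun_induction shuffle s y generalizing x p q with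
  | case1 y =>
    cases hs
    exact eq_of_mem_support_δ hx ▸ refl y
  | case2 a s => exact eq_of_mem_support_δ hx ▸ hs
  | case3 a s b y ih₁ ih₂ =>
    rcases Finset.mem_union.mp (Finsupp.support_add hx) with hx | hx
    · obtain ⟨x', rfl, hx'⟩ := exists_of_mem_support_prependLetter hx
      cases hs with
      | zero hs => exact (ih₁ hs hx').zero
      | ten hs => exact (ih₁ hs hx').ten
    · obtain ⟨x', rfl, hx'⟩ := exists_of_mem_support_prependLetter hx
      exact (ih₂ hs hx').letter b

theorem replicate_append_le {p : ℕ} {y x : Word} (h : Interleaving p 0 y x) :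
    replicate p false ++ y ≤ x := by
  generalize hq : 0 = q at h
  induction h with
  | nil => exact le_rfl
  | zero _ ih => exact cons_le_cons false (ih hq)
  | ten => exact absurd hq (Nat.succ_ne_zero _).symm
  | letter a _ ih => exact replicate_false_append_cons_le (ih hq)

theorem exists_eq_true_cons {q : ℕ} {y x : Word} (h : Interleaving 0 (q + 1) y x)
    (hy : ∀ y', y ≠ false :: y') : ∃ x', x = true :: x' := by
  cases h with
  | ten _ => exact ⟨_, rfl⟩
  | letter a _ =>
    cases a
    · exact absurd rfl (hy _)
    · exact ⟨_, rfl⟩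

end Interleaving

section Kuv

variable {u v : ℚ}

theorem half_zgen_false (g : A01) :
    half (zgen u v false) g = prependLetter true (shuffleWith [false] g) := by
  rw [zgen, δ, half_single_cons, one_smul]

theorem half_zgen_true (g : A01) :
    half (zgen u v true) g = u • prependLetter true (shuffleWith [false, false] g) +
      v • prependLetter true (shuffleWith [true, false] g) := by
  rw [zgen, δ, δ, half_add_left, half_smul_left, half_smul_left, half_single_cons,
    half_single_cons, one_smul, one_smul]

theorem Kuv_cons (a : Bool) (w : List Bool) :
    Kuv u v (a :: w) = half (zgen u v a) (Kuv u v w) := by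
  cases w with
  | cons b w => rfl
  | nil =>
    change zgen u v a = half (zgen u v a) (δ [])
    cases a
    · rw [half_zgen_false, shuffleWith_δ, shuffle_nil_right, prependLetter_δ, zgen]
    · rw [half_zgen_true, shuffleWith_δ, shuffleWith_δ, shuffle_nil_right, shuffle_nil_right,
        prependLetter_δ, prependLetter_δ, zgen]

theorem Kuv_false_cons (w : List Bool) :
    Kuv u v (false :: w) = prependLetter true (shuffleWith [false] (Kuv u v w)) := by
  rw [Kuv_cons, half_zgen_false]

theorem Kuv_true_cons (w : List Bool) :
    Kuv u v (true :: w) = u • prependLetter true (shuffleWith [false, false] (Kuv u v w)) +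
      v • prependLetter true (shuffleWith [true, false] (Kuv u v w)) := by
  rw [Kuv_cons, half_zgen_true]

theorem exists_of_mem_support_prependLetter_shuffleWith {p q : ℕ} {a : Bool} {s : Word}
    {g : A01} {x : Word} (hs : Interleaving p q [] s)
    (hx : x ∈ (prependLetter a (shuffleWith s g)).support) :
    ∃ x' y, x = a :: x' ∧ y ∈ g.support ∧ Interleaving p q y x' := by
  obtain ⟨x', rfl, hx'⟩ := exists_of_mem_support_prependLetter hx
  obtain ⟨y, hy, hxy⟩ := exists_of_mem_support_shuffleWith hx'
  exact ⟨x', y, rfl, hy, hs.of_mem_support_shuffle hxy⟩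

theorem exists_of_mem_support_Kuv_false {w : List Bool} {x : Word}
    (hx : x ∈ (Kuv u v (false :: w)).support) :
    ∃ x' y, x = true :: x' ∧ y ∈ (Kuv u v w).support ∧ Interleaving 1 0 y x' := by
  rw [Kuv_false_cons] at hx
  exact exists_of_mem_support_prependLetter_shuffleWith Interleaving.nil.zero hx

theorem exists_of_mem_support_Kuv_true {w : List Bool} {x : Word}
    (hx : x ∈ (Kuv u v (true :: w)).support) :
    ∃ x' y, x = true :: x' ∧ y ∈ (Kuv u v w).support ∧
      (u ≠ 0 ∧ Interleaving 2 0 y x' ∨ Interleaving 0 1 y x') := by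
  rw [Kuv_true_cons] at hx
  rcases mem_support_smul_add_smul hx with ⟨hu, hx⟩ | hx
  · obtain ⟨x', y, rfl, hy, hxy⟩ :=
      exists_of_mem_support_prependLetter_shuffleWith Interleaving.nil.zero.zero hx
    exact ⟨x', y, rfl, hy, .inl ⟨hu, hxy⟩⟩
  · obtain ⟨x', y, rfl, hy, hxy⟩ :=
      exists_of_mem_support_prependLetter_shuffleWith Interleaving.nil.zero.ten hx
    exact ⟨x', y, rfl, hy, .inr hxy⟩

theorem exists_of_mem_support_Kuv_cons {a : Bool} {w : List Bool} {x : Word}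
    (hx : x ∈ (Kuv u v (a :: w)).support) : ∃ x', x = true :: x' := by
  cases a
  · obtain ⟨x', -, rfl, -⟩ := exists_of_mem_support_Kuv_false hx
    exact ⟨x', rfl⟩
  · obtain ⟨x', -, rfl, -⟩ := exists_of_mem_support_Kuv_true hx
    exact ⟨x', rfl⟩

theorem ne_false_cons_of_mem_support_Kuv {w : List Bool} {y : Word}
    (hy : y ∈ (Kuv u v w).support) (y' : Word) : y ≠ false :: y' := by
  cases w with
  | nil => rw [eq_of_mem_support_δ hy]; exact (cons_ne_nil _ _).symm
  | cons a w =>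
    obtain ⟨x', rfl⟩ := exists_of_mem_support_Kuv_cons hy
    simp

theorem eq_nil_of_nil_mem_support_Kuv {w : List Bool} (h : [] ∈ (Kuv u v w).support) :
    w = [] := by
  cases w with
  | nil => rfl
  | cons a w => exact absurd (exists_of_mem_support_Kuv_cons h) (by simp)

theorem cat0_ne_false_cons (w : List Bool) (c : Word) : cat0 w ≠ false :: c := by
  cases w with
  | nil => simp [cat0]
  | cons a w => cases a <;> simp [cat0, blocks0]

theorem cat0_le_of_mem_support_Kuv : ∀ {w : List Bool} {x : Word},
    x ∈ (Kuv u v w).support → cat0 w ≤ x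
  | [], x, hx => by rw [eq_of_mem_support_δ hx]; exact le_rfl
  | false :: w, x, hx => by
    obtain ⟨x', y, rfl, hy, hxy⟩ := exists_of_mem_support_Kuv_false hx
    exact cons_le_cons true
      ((cons_le_cons false (cat0_le_of_mem_support_Kuv hy)).trans hxy.replicate_append_le)
  | true :: w, x, hx => by
    obtain ⟨x', y, rfl, hy, ⟨-, hxy⟩ | hxy⟩ := exists_of_mem_support_Kuv_true hx
    · exact cons_le_cons true ((cons_le_cons false (cons_le_cons false
        (cat0_le_of_mem_support_Kuv hy))).trans hxy.replicate_append_le)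
    · obtain ⟨x'', rfl⟩ := hxy.exists_eq_true_cons (ne_false_cons_of_mem_support_Kuv hy)
      exact cons_le_cons true (false_cons_lt_true_cons _ _).le

theorem shuffleWith_replicate_apply_replicate_append {g : A01} {c : Word}
    (hg : ∀ y ∈ g.support, c ≤ y) (hc : ∀ c', c ≠ false :: c') (p : ℕ) :
    shuffleWith (replicate p false) g (replicate p false ++ c) = g c := by
  rw [shuffleWith_apply, Finset.sum_eq_single c, shuffle_replicate_apply_replicate_append p hc,
    mul_one]
  · intro y hy hyc
    have hlt : replicate p false ++ c < replicate p false ++ y :=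
      append_left_lt ((hg y hy).lt_of_ne (Ne.symm hyc))
    rw [Finsupp.notMem_support_iff.mp fun hx => hlt.not_ge
      ((Interleaving.zeros p).of_mem_support_shuffle hx).replicate_append_le, mul_zero]
  · intro hc
    rw [Finsupp.notMem_support_iff.mp hc, zero_mul]

theorem shuffleWith_true_false_Kuv_apply_false_cons (w : List Bool) (z : Word) :
    shuffleWith [true, false] (Kuv u v w) (false :: z) = 0 := by
  refine Finsupp.notMem_support_iff.mp fun hx => ?_
  obtain ⟨y, hy, hxy⟩ := exists_of_mem_support_shuffleWith hx
  obtain ⟨x', hx'⟩ := (Interleaving.nil.zero.ten.of_mem_support_shuffle hxy).exists_eq_true_cons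
    (ne_false_cons_of_mem_support_Kuv hy)
  simp at hx'

theorem Kuv_apply_cat0 (w : List Bool) : Kuv u v w (cat0 w) = u ^ w.count true := by
  induction w with
  | nil => simp [Kuv, Klist, cat0, δ]
  | cons a w ih =>
    have hg : ∀ y ∈ (Kuv u v w).support, cat0 w ≤ y := fun _ => cat0_le_of_mem_support_Kuv
    have hc := cat0_ne_false_cons w
    cases a
    · have h1 : shuffleWith [false] (Kuv u v w) ([false] ++ cat0 w) = Kuv u v w (cat0 w) :=
        shuffleWith_replicate_apply_replicate_append hg hc 1
      change Kuv u v (false :: w) (true :: ([false] ++ cat0 w)) = _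
      rw [Kuv_false_cons, prependLetter_apply_cons_self, h1, ih, count_cons_of_ne (by decide)]
    · have h2 : shuffleWith [false, false] (Kuv u v w) ([false, false] ++ cat0 w) =
          Kuv u v w (cat0 w) :=
        shuffleWith_replicate_apply_replicate_append hg hc 2
      change Kuv u v (true :: w) (true :: ([false, false] ++ cat0 w)) = _
      rw [Kuv_true_cons, Finsupp.add_apply, Finsupp.smul_apply, Finsupp.smul_apply,
        prependLetter_apply_cons_self, prependLetter_apply_cons_self, h2, ih, cons_append,
        shuffleWith_true_false_Kuv_apply_false_cons, count_cons_self, pow_succ, smul_zero,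
        add_zero, smul_eq_mul, mul_comm]

end Kuv

theorem Kuv_zero_eq_smul (v : ℚ) (w : List Bool) :
    Kuv 0 v w = v ^ w.count true • Kuv 0 1 w := by
  induction w with
  | nil => rw [count_nil, pow_zero, one_smul]; rfl
  | cons a w ih =>
    cases a
    · rw [Kuv_false_cons, Kuv_false_cons, ih, map_smul, prependLetter, prependLetter,
        Finsupp.mapDomain_smul, count_cons_of_ne (by decide)]
    · rw [Kuv_true_cons, Kuv_true_cons, ih, zero_smul, zero_add, zero_smul, zero_add, one_smul,
        map_smul, prependLetter, prependLetter, Finsupp.mapDomain_smul, smul_smul,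
        count_cons_self, pow_succ']

theorem Kuv_zero_one_nonneg (w : List Bool) : 0 ≤ Kuv 0 1 w := by
  induction w with
  | nil => exact δ_nonneg []
  | cons a w ih =>
    cases a
    · rw [Kuv_false_cons]
      exact prependLetter_nonneg _ (shuffleWith_nonneg _ ih)
    · rw [Kuv_true_cons, zero_smul, zero_add, one_smul]
      exact prependLetter_nonneg _ (shuffleWith_nonneg _ ih)

theorem one_le_Kuv_zero_one_apply_cat1 (w : List Bool) : 1 ≤ Kuv 0 1 w (cat1 w) := by
  induction w with
  | nil => simp [Kuv, Klist, cat1, δ]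
  | cons a w ih =>
    cases a
    · change 1 ≤ Kuv 0 1 (false :: w) (true :: ([false] ++ cat1 w))
      rw [Kuv_false_cons, prependLetter_apply_cons_self]
      exact ih.trans (le_shuffleWith_apply_append (Kuv_zero_one_nonneg w) _ _)
    · change 1 ≤ Kuv 0 1 (true :: w) (true :: ([true, false] ++ cat1 w))
      rw [Kuv_true_cons, zero_smul, zero_add, one_smul, prependLetter_apply_cons_self]
      exact ih.trans (le_shuffleWith_apply_append (Kuv_zero_one_nonneg w) _ _)

theorem Kuv_zero_apply_cat1_ne_zero {v : ℚ} (hv : v ≠ 0) (w : List Bool) :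
    Kuv 0 v w (cat1 w) ≠ 0 := by
  rw [Kuv_zero_eq_smul, Finsupp.smul_apply, smul_eq_mul]
  exact mul_ne_zero (pow_ne_zero _ hv) (zero_lt_one.trans_le (one_le_Kuv_zero_one_apply_cat1 w)).ne'

theorem replicate_append_cat1_false_cons_le {p q : ℕ} {w : List Bool} {x : Word}
    (h : replicate (1 + p) false ++ cat1 (replicate q false ++ w) ≤ x) :
    replicate p false ++ cat1 (replicate q false ++ false :: w) ≤ true :: x := by
  cases p with
  | zero => exact replicate_append_cons_self q false w ▸ cons_le_cons true h
  | succ p => exact (false_cons_lt_true_cons _ _).le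

theorem replicate_append_cat1_true_cons_le {p q : ℕ} {w : List Bool} {x : Word}
    (h : replicate p false ++ cat1 (replicate (1 + q) false ++ w) ≤ x) :
    replicate p false ++ cat1 (replicate q false ++ true :: w) ≤ true :: x := by
  cases p with
  | succ p => exact (false_cons_lt_true_cons _ _).le
  | zero =>
    cases q with
    | zero => exact cons_le_cons true h
    | succ q =>
      obtain ⟨x', rfl⟩ := exists_eq_true_cons_of_le h
      exact cons_le_cons true (false_cons_lt_true_cons _ _).le

-- Shuffling with `10` is not monotone for the lexicographic order, so the bound is proved for
-- all pending `0`s and `10`s at once.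
theorem replicate_append_cat1_le_of_interleaving {v : ℚ} {x : Word} :
    ∀ {w : List Bool} {p q : ℕ} {y : Word}, Interleaving p q y x →
      y ∈ (Kuv 0 v w).support → replicate p false ++ cat1 (replicate q false ++ w) ≤ x := by
  induction x with
  | nil =>
    intro w p q y h hy
    cases h
    rw [eq_nil_of_nil_mem_support_Kuv hy]
    exact le_rfl
  | cons a x ih =>
    intro w p q y h hy
    cases h with
    | zero h => exact cons_le_cons false (ih h hy)
    | ten h =>
      cases p with
      | zero => exact cons_le_cons true (ih h hy)
      | succ p => exact (false_cons_lt_true_cons _ _).le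
    | letter _ h =>
      cases w with
      | nil => exact absurd (eq_of_mem_support_δ hy) (cons_ne_nil _ _)
      | cons b w =>
        cases b
        · obtain ⟨_, y₀, heq, hy₀, hint⟩ := exists_of_mem_support_Kuv_false hy
          obtain ⟨rfl, rfl⟩ := List.cons.inj heq
          have hb := ih (h.trans hint) hy₀
          rw [zero_add] at hb
          exact replicate_append_cat1_false_cons_le hb
        · obtain ⟨_, y₀, heq, hy₀, ⟨hu, -⟩ | hint⟩ := exists_of_mem_support_Kuv_true hy
          · exact absurd rfl hu
          obtain ⟨rfl, rfl⟩ := List.cons.inj heq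
          have hb := ih (h.trans hint) hy₀
          rw [zero_add] at hb
          exact replicate_append_cat1_true_cons_le hb

theorem cat1_le_of_mem_support_Kuv_zero {v : ℚ} {w : List Bool} {x : Word}
    (hx : x ∈ (Kuv 0 v w).support) : cat1 w ≤ x :=
  replicate_append_cat1_le_of_interleaving (Interleaving.refl x) hx

theorem cat0_injective : Function.Injective cat0 := by
  intro w w' h
  induction w generalizing w' with
  | nil => cases w' with
    | nil => rfl
    | cons b w' => cases b <;> simp [cat0, blocks0] at h
  | cons a w ih =>
    cases w' with
    | nil => cases a <;> simp [cat0, blocks0] at h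
    | cons b w' =>
      replace h : blocks0 a ++ cat0 w = blocks0 b ++ cat0 w' := h
      cases a <;> cases b <;> simp [blocks0] at h
      · rw [ih h]
      · exact absurd h (cat0_ne_false_cons _ _)
      · exact absurd h.symm (cat0_ne_false_cons _ _)
      · rw [ih h]

theorem cat1_injective : Function.Injective cat1 := by
  intro w w' h
  induction w generalizing w' with
  | nil => cases w' with
    | nil => rfl
    | cons b w' => cases b <;> simp [cat1, blocks1] at h
  | cons a w ih =>
    cases w' with
    | nil => cases a <;> simp [cat1, blocks1] at h
    | cons b w' =>
      replace h : blocks1 a ++ cat1 w = blocks1 b ++ cat1 w' := h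
      cases a <;> cases b <;> simp [blocks1] at h
      all_goals rw [ih h]

/-- For `(u,v) ≠ (0,0)`, the family `K_{u,v}(w)`, indexed by nonempty words `w` over `{2,3}`
(encoded with `false` = `2`, `true` = `3`), is linearly independent over `ℚ` in `A`:
the zinbiel subalgebra `C_{u,v}` is free on the two generators `z_2, z_3`. -/
theorem Kuv_linearIndependent (u v : ℚ) (huv : (u, v) ≠ (0, 0)) :
    LinearIndependent ℚ (fun w : {l : List Bool // l ≠ []} => Kuv u v w.1) := by
  by_cases hu : u = 0
  · subst hu
    have hv : v ≠ 0 := by rintro rfl; exact huv rfl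
    exact linearIndependent_of_triangular _ (fun w => cat1 w.1)
      (cat1_injective.comp Subtype.val_injective)
      (fun _ _ hx => cat1_le_of_mem_support_Kuv_zero hx)
      (fun w => Kuv_zero_apply_cat1_ne_zero hv w.1)
  · exact linearIndependent_of_triangular _ (fun w => cat0 w.1)
      (cat0_injective.comp Subtype.val_injective)
      (fun _ _ hx => cat0_le_of_mem_support_Kuv hx)
      (fun w => by rw [Kuv_apply_cat0]; exact pow_ne_zero _ hu)
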